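/- Let γ be the standard Gaussian measure on ℝⁿ and let φ : ℝⁿ → ℝ be a C² function such that the map T(x) = x + ∇φ(x) is a bijection of ℝⁿ and the matrix I + Hess φ(x) is invertible for every x, with det(I + Hess φ(x)) > 0 for all x. Define Λ(x) = det(I + Hess φ(x)) · exp( −⟨x, ∇φ(x)⟩ − (1/2)‖∇φ(x)‖² ). Then for every bounded measurable f : ℝⁿ → ℝ, ∫ f(T(x)) · Λ(x) dγ(x) = ∫ f(y) dγ(y); equivalently, the pushforward of the measure Λ·γ under T equals γ. (This is the finite-dimensional Jacobian formula for the Gaussian change of variables under T = I + ∇φ; in it, det(I+Hess φ)·exp(−tr Hess φ) is the Carleman–Fredholm determinant det₂(I+∇²φ) and ⟨x,∇φ(x)⟩ − Δφ(x) is the Ornstein–Uhlenbeck operator 𝓛φ, so Λ = det₂(I+∇²φ)·exp(−𝓛φ − ‖∇φ‖²/2).) -/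

import Mathlib

open MeasureTheory Real
open scoped RealInnerProductSpace ENNReal

/-- The standard Gaussian measure on `ℝⁿ` (identity covariance, mean zero). -/
noncomputable def stdGaussian (n : ℕ) : Measure (EuclideanSpace ℝ (Fin n)) :=
  (volume : Measure (EuclideanSpace ℝ (Fin n))).withDensity
    (fun x => ENNReal.ofReal ((2 * π) ^ (-(n : ℝ) / 2) * Real.exp (-‖x‖ ^ 2 / 2)))

/-- A function has at most polynomial growth. -/
def PolyGrowth {E F : Type*} [NormedAddCommGroup E] [NormedAddCommGroup F]
    (g : E → F) : Prop :=
  ∃ C > (0 : ℝ), ∃ k : ℕ, ∀ x, ‖g x‖ ≤ C * (1 + ‖x‖) ^ k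

private lemma map_withDensity_comp' {α β : Type*} [MeasurableSpace α] [MeasurableSpace β]
    (μ : Measure α) (T : α → β) (hT : Measurable T) (g : β → ℝ≥0∞) (hg : Measurable g) :
    (μ.withDensity (g ∘ T)).map T = (μ.map T).withDensity g := by
  ext s hs
  rw [Measure.map_apply hT hs, withDensity_apply _ (hT hs), withDensity_apply _ hs,
    setLIntegral_map hs hg hT]
  rfl

theorem stmt_11 (n : ℕ) (φ : EuclideanSpace ℝ (Fin n) → ℝ)
    (hφ : ContDiff ℝ 2 φ)
    (hTbij : Function.Bijective (fun x => x + gradient φ x))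
    (hdetpos : ∀ x : EuclideanSpace ℝ (Fin n),
      0 < LinearMap.det
        ((ContinuousLinearMap.id ℝ (EuclideanSpace ℝ (Fin n))
          + fderiv ℝ (gradient φ) x).toLinearMap))
    (Λ : EuclideanSpace ℝ (Fin n) → ℝ)
    (hΛ : ∀ x, Λ x
        = LinearMap.det
            ((ContinuousLinearMap.id ℝ (EuclideanSpace ℝ (Fin n))
              + fderiv ℝ (gradient φ) x).toLinearMap)
          * Real.exp (-⟪x, gradient φ x⟫ - ‖gradient φ x‖ ^ 2 / 2)) :
    (∀ f : EuclideanSpace ℝ (Fin n) → ℝ, Measurable f → (∃ C, ∀ y, |f y| ≤ C) →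
        ∫ x, f (x + gradient φ x) * Λ x ∂(stdGaussian n) = ∫ y, f y ∂(stdGaussian n))
    ∧ ((stdGaussian n).withDensity (fun x => ENNReal.ofReal (Λ x))).map
          (fun x => x + gradient φ x) = stdGaussian n := by
  have hgrad : ContDiff ℝ 1 (gradient φ) := by
    have h : gradient φ
        = fun x => (InnerProductSpace.toDual ℝ (EuclideanSpace ℝ (Fin n))).symm
            (fderiv ℝ φ x) := rfl
    rw [h]
    exact (InnerProductSpace.toDual ℝ _).symm.contDiff.comp (hφ.fderiv_right le_rfl)
  have hgdiff : Differentiable ℝ (gradient φ) := hgrad.differentiable one_ne_zero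
  have hgcont : Continuous (gradient φ) := hgrad.continuous
  have hfdcont : Continuous (fun x => fderiv ℝ (gradient φ) x) :=
    (hgrad.fderiv_right (m := 0) le_rfl).continuous
  have hTcont : Continuous (fun x => x + gradient φ x) := continuous_id.add hgcont
  have hTm : Measurable (fun x => x + gradient φ x) := hTcont.measurable
  have hT' : ∀ x, HasFDerivAt (fun x => x + gradient φ x)
      (ContinuousLinearMap.id ℝ (EuclideanSpace ℝ (Fin n)) + fderiv ℝ (gradient φ) x) x :=
    fun x => (hasFDerivAt_id x).add (hgdiff x).hasFDerivAt
  have hdetA : ∀ x, (ContinuousLinearMap.id ℝ (EuclideanSpace ℝ (Fin n))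
      + fderiv ℝ (gradient φ) x).det
      = LinearMap.det ((ContinuousLinearMap.id ℝ (EuclideanSpace ℝ (Fin n))
        + fderiv ℝ (gradient φ) x).toLinearMap) := fun _ => rfl
  have hΛpos : ∀ x, 0 < Λ x := fun x => by
    rw [hΛ x]; exact mul_pos (hdetpos x) (Real.exp_pos _)
  have hΛcont : Continuous Λ := by
    have h : Λ = fun x => (ContinuousLinearMap.id ℝ (EuclideanSpace ℝ (Fin n))
        + fderiv ℝ (gradient φ) x).det
        * Real.exp (-⟪x, gradient φ x⟫ - ‖gradient φ x‖ ^ 2 / 2) := by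
      funext x; rw [hΛ x, hdetA]
    rw [h]
    apply Continuous.mul
    · exact ContinuousLinearMap.continuous_det.comp (continuous_const.add hfdcont)
    · exact Real.continuous_exp.comp
        ((continuous_id.inner hgcont).neg.sub ((hgcont.norm.pow 2).div_const 2))
  have hΛm : Measurable Λ := hΛcont.measurable
  have hAdetcont : Continuous (fun x => (ContinuousLinearMap.id ℝ (EuclideanSpace ℝ (Fin n))
      + fderiv ℝ (gradient φ) x).det) :=
    ContinuousLinearMap.continuous_det.comp (continuous_const.add hfdcont)
  have hpt : ∀ x, ENNReal.ofReal ((2 * π) ^ (-(n : ℝ) / 2) * Real.exp (-‖x‖ ^ 2 / 2))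
      * ENNReal.ofReal (Λ x)
      = ENNReal.ofReal |(ContinuousLinearMap.id ℝ (EuclideanSpace ℝ (Fin n))
          + fderiv ℝ (gradient φ) x).det| *
        ENNReal.ofReal ((2 * π) ^ (-(n : ℝ) / 2)
          * Real.exp (-‖x + gradient φ x‖ ^ 2 / 2)) := by
    intro x
    rw [← ENNReal.ofReal_mul (by positivity), ← ENNReal.ofReal_mul (abs_nonneg _)]
    congr 1
    rw [hΛ x, hdetA, abs_of_pos (hdetpos x)]
    have hns : ‖x + gradient φ x‖ ^ 2
        = ‖x‖ ^ 2 + 2 * ⟪x, gradient φ x⟫ + ‖gradient φ x‖ ^ 2 :=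
      norm_add_sq_real x (gradient φ x)
    have hexp : Real.exp (-‖x‖ ^ 2 / 2)
        * Real.exp (-⟪x, gradient φ x⟫ - ‖gradient φ x‖ ^ 2 / 2)
        = Real.exp (-‖x + gradient φ x‖ ^ 2 / 2) := by
      rw [← Real.exp_add]
      congr 1
      rw [hns]
      ring
    rw [← hexp]
    ring
  have hmapdet : Measure.map (fun x => x + gradient φ x)
      (volume.withDensity fun x => ENNReal.ofReal
        |(ContinuousLinearMap.id ℝ (EuclideanSpace ℝ (Fin n))
          + fderiv ℝ (gradient φ) x).det|)
      = volume := by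
    have := map_withDensity_abs_det_fderiv_eq_addHaar
      (volume : Measure (EuclideanSpace ℝ (Fin n)))
      MeasurableSet.univ.nullMeasurableSet (fun x _ => (hT' x).hasFDerivWithinAt)
      (hTbij.injective.injOn)
    simpa [Measure.restrict_univ, Set.image_univ, hTbij.surjective.range_eq] using this
  have hg : Measurable (fun y : EuclideanSpace ℝ (Fin n) =>
      ENNReal.ofReal ((2 * π) ^ (-(n : ℝ) / 2) * Real.exp (-‖y‖ ^ 2 / 2))) := by
    apply Measurable.ennreal_ofReal
    exact (continuous_const.mul (Real.continuous_exp.comp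
      ((continuous_norm.pow 2).neg.div_const 2))).measurable
  have hdetm : Measurable (fun x => ENNReal.ofReal
      |(ContinuousLinearMap.id ℝ (EuclideanSpace ℝ (Fin n))
        + fderiv ℝ (gradient φ) x).det|) := by
    apply Measurable.ennreal_ofReal
    exact hAdetcont.abs.measurable
  have hmap : ((stdGaussian n).withDensity (fun x => ENNReal.ofReal (Λ x))).map
      (fun x => x + gradient φ x) = stdGaussian n := by
    have h1 : (stdGaussian n).withDensity (fun x => ENNReal.ofReal (Λ x))
        = (volume.withDensity (fun x => ENNReal.ofReal
            |(ContinuousLinearMap.id ℝ (EuclideanSpace ℝ (Fin n))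
              + fderiv ℝ (gradient φ) x).det|)).withDensity
          ((fun y => ENNReal.ofReal ((2 * π) ^ (-(n : ℝ) / 2)
            * Real.exp (-‖y‖ ^ 2 / 2))) ∘ (fun x => x + gradient φ x)) := by
      rw [stdGaussian, ← withDensity_mul _ hg (hΛm.ennreal_ofReal),
        ← withDensity_mul _ hdetm (hg.comp hTm)]
      congr 1
      funext x
      exact hpt x
    rw [h1, map_withDensity_comp' _ _ hTm _ hg, hmapdet, stdGaussian]
  refine ⟨?_, hmap⟩
  intro f hf _
  have hfae : AEStronglyMeasurable f
      (((stdGaussian n).withDensity (fun x => ENNReal.ofReal (Λ x))).map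
        (fun x => x + gradient φ x)) :=
    hf.aestronglyMeasurable
  calc ∫ x, f (x + gradient φ x) * Λ x ∂(stdGaussian n)
      = ∫ x, (Λ x).toNNReal • f (x + gradient φ x) ∂(stdGaussian n) := by
        congr 1; funext x
        rw [NNReal.smul_def, smul_eq_mul, Real.coe_toNNReal _ (hΛpos x).le, mul_comm]
    _ = ∫ x, f (x + gradient φ x)
          ∂((stdGaussian n).withDensity (fun x => ((Λ x).toNNReal : ℝ≥0∞))) :=
        (integral_withDensity_eq_integral_smul hΛm.real_toNNReal _).symm
    _ = ∫ x, f (x + gradient φ x)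
          ∂((stdGaussian n).withDensity (fun x => ENNReal.ofReal (Λ x))) := rfl
    _ = ∫ y, f y ∂(((stdGaussian n).withDensity (fun x => ENNReal.ofReal (Λ x))).map
          (fun x => x + gradient φ x)) :=
        (integral_map hTm.aemeasurable hfae).symm
    _ = ∫ y, f y ∂(stdGaussian n) := by rw [hmap]
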